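/- If A ⊆ ℤ_{≥0}^n is a finite weak antichain, then the set A' = C_n(C_{n−1}(⋯(C_1(A))⋯)) obtained by successively applying the compressions C_1, C_2, …, C_n satisfies: (i) |π_i(A')| ≤ |π_i(A)| for each i; (ii) A' is k-compressed for all k; (iii) A' is layer-decomposable, A' = A'_1 ∪ … ∪ A'_n; (iv) A'_k = {x ∈ A' : x_k = 0 but x_l ≠ 0 for all l < k} for all k; (v) A' ⊆ X_n, i.e. every element of A' has some zero coordinate. -/

import Mathlib

namespace ProjWA

variable {ι : Type*}

/-- `A ⊆ ℤ^ι` is a weak antichain if it contains no `x, y` with `x i < y i` for every `i`. -/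
def IsWeakAntichain [Fintype ι] (A : Finset (ι → ℤ)) : Prop :=
  ∀ x ∈ A, ∀ y ∈ A, ¬ ∀ i, x i < y i

/-- The projection deleting the coordinate `i`. -/
def projFun [DecidableEq ι] (i : ι) (x : ι → ℤ) : {j : ι // j ≠ i} → ℤ :=
  fun j => x j.1

/-- The image of a finite set under the projection deleting coordinate `i`. -/
def proj [Fintype ι] [DecidableEq ι] (i : ι) (A : Finset (ι → ℤ)) :
    Finset ({j : ι // j ≠ i} → ℤ) :=
  A.image (projFun i)

/-- `gap A = Σ_i |π_i(A)| - |A|`. -/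
def gap [Fintype ι] [DecidableEq ι] (A : Finset (ι → ℤ)) : ℤ :=
  (∑ i : ι, ((proj i A).card : ℤ)) - A.card

/-- `X_n`: the set of points of `ℤ_{≥0}^ι` having at least one coordinate equal to zero. -/
def XSet (ι : Type*) : Set (ι → ℤ) :=
  {x | (∀ i, 0 ≤ x i) ∧ ∃ i, x i = 0}

/-- A down-set in `ℤ_{≥0}^ι`. -/
def IsDownSet (A : Finset (ι → ℤ)) : Prop :=
  ∀ x y : ι → ℤ, (∀ i, 0 ≤ x i) → (∀ i, x i ≤ y i) → y ∈ A → x ∈ A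

/-- The `i`-th bottom layer `B_i(A)`. -/
def bottomLayer [Fintype ι] [DecidableEq ι] (i : ι) (A : Finset (ι → ℤ)) : Finset (ι → ℤ) :=
  A.filter fun x => ∀ y ∈ A, (∀ j, j ≠ i → y j = x j) → x i ≤ y i

/-- The `i`-compression `C_i(A)`: each `x ∈ B_i(A)` is replaced by the point obtained
by setting its `i`-th coordinate to `0`. -/
def compress [Fintype ι] [DecidableEq ι] (i : ι) (A : Finset (ι → ℤ)) : Finset (ι → ℤ) :=
  (A \ bottomLayer i A) ∪ (bottomLayer i A).image fun x => Function.update x i 0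

/-- `layersRest A k = A \ (A_1 ∪ ⋯ ∪ A_k)` where `A_i` are the layers of `A`. -/
def layersRest {n : ℕ} (A : Finset (Fin n → ℤ)) : ℕ → Finset (Fin n → ℤ)
  | 0 => A
  | k + 1 =>
      layersRest A k \ (if h : k < n then bottomLayer ⟨k, h⟩ (layersRest A k) else ∅)

/-- The layers `A_1, …, A_n` of `A`, defined by `A_i = B_i(A \ (A_1 ∪ ⋯ ∪ A_{i-1}))`. -/
def layer {n : ℕ} (A : Finset (Fin n → ℤ)) (i : Fin n) : Finset (Fin n → ℤ) :=
  bottomLayer i (layersRest A i.1)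

/-- `compressUpTo A k = C_k(C_{k-1}(⋯(C_1(A))⋯))`. -/
def compressUpTo {n : ℕ} (A : Finset (Fin n → ℤ)) : ℕ → Finset (Fin n → ℤ)
  | 0 => A
  | k + 1 =>
      if h : k < n then compress ⟨k, h⟩ (compressUpTo A k) else compressUpTo A k

/-- The complete `i`-compression `𝒞_i(A)`: every line in direction `i` is replaced
by an initial segment of the same size. -/
def ccompress [Fintype ι] [DecidableEq ι] (i : ι) (A : Finset (ι → ℤ)) : Finset (ι → ℤ) :=
  A.biUnion fun x =>
    (Finset.range ((A.filter fun y => ∀ j, j ≠ i → y j = x j).card)).image fun a : ℕ =>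
      Function.update x i (a : ℤ)

/-- The set `T = {i : x i ≠ y i}` of coordinates where `x` and `y` differ. -/
def diffSet [Fintype ι] (x y : ι → ℤ) : Finset ι :=
  Finset.univ.filter fun i => x i ≠ y i

/-- The maximum value of `x` on a finite set of coordinates (`⊥` if the set is empty). -/
def maxOn (s : Finset ι) (x : ι → ℤ) : WithBot ℤ :=
  (s.image x).max

/-- The largest coordinate in `s` at which `x` attains its maximum over `s`. -/
def argmaxOn [LinearOrder ι] (s : Finset ι) (x : ι → ℤ) : WithBot ι :=
  (s.filter fun i => (x i : WithBot ℤ) = maxOn s x).max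

/-- The balanced order: with `T = {i : x i ≠ y i}`, `x < y` iff the maximum of `x` on `T` is
smaller than that of `y` on `T`, or they are equal and the largest index where `x` attains
this maximum on `T` is smaller than the corresponding index for `y`. -/
def balancedLT [Fintype ι] [LinearOrder ι] (x y : ι → ℤ) : Prop :=
  x ≠ y ∧
    (maxOn (diffSet x y) x < maxOn (diffSet x y) y ∨
      (maxOn (diffSet x y) x = maxOn (diffSet x y) y ∧
        argmaxOn (diffSet x y) x < argmaxOn (diffSet x y) y))

/-- `I` is an initial segment of the balanced order on `X_ι`. -/
def IsInitSeg [Fintype ι] [LinearOrder ι] (I : Finset (ι → ℤ)) : Prop :=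
  ↑I ⊆ XSet ι ∧ ∀ x ∈ I, ∀ y ∈ XSet ι, balancedLT y x → y ∈ I

/-- `S(A) = {x ∈ ℤ_{>0}^ι : replacing any one coordinate of x by 0 gives an element of A}`. -/
def SSet [DecidableEq ι] (A : Finset (ι → ℤ)) : Set (ι → ℤ) :=
  {x | (∀ k, 0 < x k) ∧ ∀ k, Function.update x k 0 ∈ A}

/-- Insert the value `a` at position `i`. -/
def insertAt [DecidableEq ι] (i : ι) (a : ℤ) (x : {j : ι // j ≠ i} → ℤ) : ι → ℤ :=
  fun j => if h : j = i then a else x ⟨j, h⟩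

/-- `L^i_a(A)`: the elements of `X_{n-1}` which, after inserting the value `a` at
position `i`, give elements of `A`. -/
def Lset [Fintype ι] [DecidableEq ι] (i : ι) (a : ℤ) (A : Finset (ι → ℤ)) :
    Finset ({j : ι // j ≠ i} → ℤ) :=
  (proj i (A.filter fun x => x i = a)).filter fun x' => ∃ j, x' j = 0

/-- `K^i(A)`: the elements of `ℤ_{>0}^{n-1}` which, after inserting a `0` at position `i`,
give elements of `A`. -/
def Kset [Fintype ι] [DecidableEq ι] (i : ι) (A : Finset (ι → ℤ)) :
    Finset ({j : ι // j ≠ i} → ℤ) :=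
  (proj i (A.filter fun x => x i = 0)).filter fun x' => ∀ j, 0 < x' j

/-- `K` is an initial segment of `ℤ_{>0}^{n-1}` with respect to the order `≺` defined by
`x ≺ y` iff inserting a `0` at position `i` into `x` gives a smaller element of `X_n`
(in the balanced order) than inserting a `0` at position `i` into `y`. -/
def IsKInitSeg [Fintype ι] [LinearOrder ι] (i : ι) (K : Finset ({j : ι // j ≠ i} → ℤ)) :
    Prop :=
  (∀ x ∈ K, ∀ j, 0 < x j) ∧
    ∀ x ∈ K, ∀ y : {j : ι // j ≠ i} → ℤ, (∀ j, 0 < y j) →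
      balancedLT (insertAt i 0 y) (insertAt i 0 x) → y ∈ K

/-- `A_N = {x ∈ ℤ^n : 0 ≤ x_j ≤ N-1 for all j, and x_i = 0 for some i}`. -/
def ANbox (n N : ℕ) : Finset (Fin n → ℤ) :=
  (Fintype.piFinset fun _ : Fin n => (Finset.range N).image fun k : ℕ => (k : ℤ)).filter
    fun x => ∃ i, x i = 0

/-- `g(n,m)`: the minimum of `gap A` over weak antichains `A` of size `m` in `ℤ^n`. -/
noncomputable def gMin (n m : ℕ) : ℝ :=
  sInf {r : ℝ | ∃ A : Finset (Fin n → ℤ), IsWeakAntichain A ∧ A.card = m ∧ (gap A : ℝ) = r}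

/-! Compressing never enlarges a projection: `π_i(C_i A) ⊆ π_i A`, and for `j ≠ i` the
compression commutes with `π_i` up to inclusion, `π_i(C_j A) ⊆ C_j(π_i A)`. After `C_k` the set is
closed under setting coordinate `k` to zero, and later compressions keep this closure, so `A'` is
closed under zeroing every coordinate. For a subset of `ℤ_{≥0}^n` with that closure the bottom
layer `B_k` is just `{x : x_k = 0}`, which gives (ii) and (iv). Every point of `A'` arises from a
point of `A` by lowering its positive coordinates, so a point of `A'` without zero coordinates
would lie in `A` and strictly dominate a point of `A`; this is (v), and (iii) follows by sorting
each point by its first zero coordinate. -/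

open Function

section Compress

variable [DecidableEq ι]

lemma projFun_update {i j : ι} (h : j ≠ i) (x : ι → ℤ) (v : ℤ) :
    projFun i (update x j v) = update (projFun i x) ⟨j, h⟩ v := by
  funext l
  rcases eq_or_ne l ⟨j, h⟩ with rfl | hl
  · simp [projFun]
  · have hlj : l.1 ≠ j := fun hlj => hl (Subtype.ext hlj)
    simp [projFun, update_of_ne hl, update_of_ne hlj]

lemma projFun_update_self (i : ι) (x : ι → ℤ) (v : ℤ) : projFun i (update x i v) = projFun i x := by
  funext l
  simp [projFun, update_of_ne l.2]

variable {i j : ι} {A : Finset (ι → ℤ)} {x : ι → ℤ}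

lemma update_mem_filter {p : (ι → ℤ) → Prop} [DecidablePred p] (hA : ∀ x ∈ A, update x i 0 ∈ A)
    (hp : ∀ x, p x → p (update x i 0)) (hx : x ∈ A.filter p) : update x i 0 ∈ A.filter p :=
  Finset.mem_filter.2 ⟨hA x (Finset.mem_filter.1 hx).1, hp x (Finset.mem_filter.1 hx).2⟩

variable [Fintype ι]

lemma bottomLayer_subset (i : ι) (A : Finset (ι → ℤ)) : bottomLayer i A ⊆ A :=
  Finset.filter_subset _ _

lemma exists_lt_of_not_mem_bottomLayer (hx : x ∈ A) (hB : x ∉ bottomLayer i A) :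
    ∃ y ∈ A, (∀ j, j ≠ i → y j = x j) ∧ y i < x i := by
  simpa [bottomLayer, hx] using hB

lemma mem_compress :
    x ∈ compress i A ↔
      (x ∈ A ∧ x ∉ bottomLayer i A) ∨ ∃ w ∈ bottomLayer i A, update w i 0 = x := by
  simp [compress]

lemma update_mem_compress (hx : x ∈ A) : update x i 0 ∈ compress i A := by
  obtain ⟨m, hm, hmin⟩ := (A.filter fun y => ∀ l, l ≠ i → y l = x l).exists_min_image
    (fun y => y i) ⟨x, Finset.mem_filter.2 ⟨hx, fun _ _ => rfl⟩⟩
  rw [Finset.mem_filter] at hm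
  have hmB : m ∈ bottomLayer i A := Finset.mem_filter.2
    ⟨hm.1, fun y hy hyx =>
      hmin y (Finset.mem_filter.2 ⟨hy, fun l hl => (hyx l hl).trans (hm.2 l hl)⟩)⟩
  refine mem_compress.2 (Or.inr ⟨m, hmB, ?_⟩)
  funext l
  rcases eq_or_ne l i with rfl | hl
  · simp
  · simp [update_of_ne hl, hm.2 l hl]

lemma card_compress_le (i : ι) (A : Finset (ι → ℤ)) : (compress i A).card ≤ A.card :=
  calc (compress i A).card
      ≤ (A \ bottomLayer i A).card + ((bottomLayer i A).image fun x => update x i 0).card :=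
        Finset.card_union_le _ _
    _ ≤ (A \ bottomLayer i A).card + (bottomLayer i A).card :=
        Nat.add_le_add_left Finset.card_image_le _
    _ = A.card := Finset.card_sdiff_add_card_eq_card (bottomLayer_subset i A)

lemma proj_compress_self_subset (i : ι) (A : Finset (ι → ℤ)) :
    proj i (compress i A) ⊆ proj i A := by
  intro q hq
  obtain ⟨x, hx, rfl⟩ := Finset.mem_image.1 hq
  rcases mem_compress.1 hx with ⟨hxA, -⟩ | ⟨w, hw, rfl⟩
  · exact Finset.mem_image_of_mem _ hxA
  · rw [projFun_update_self]
    exact Finset.mem_image_of_mem _ (bottomLayer_subset i A hw)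

lemma proj_compress_subset_compress_proj (h : j ≠ i) (A : Finset (ι → ℤ)) :
    proj i (compress j A) ⊆ compress (⟨j, h⟩ : {l : ι // l ≠ i}) (proj i A) := by
  intro q hq
  obtain ⟨x, hx, rfl⟩ := Finset.mem_image.1 hq
  rcases mem_compress.1 hx with ⟨hxA, hxB⟩ | ⟨w, hw, rfl⟩
  · refine mem_compress.2 (Or.inl ⟨Finset.mem_image_of_mem _ hxA, fun hB => ?_⟩)
    obtain ⟨y, hy, hyx, hlt⟩ := exists_lt_of_not_mem_bottomLayer hxA hxB
    have hle := (Finset.mem_filter.1 hB).2 (projFun i y) (Finset.mem_image_of_mem _ hy)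
      fun l hl => hyx l.1 fun hlj => hl (Subtype.ext hlj)
    exact (not_le.2 hlt) hle
  · rw [projFun_update h]
    exact update_mem_compress (Finset.mem_image_of_mem _ (bottomLayer_subset j A hw))

lemma card_proj_compress_le (i j : ι) (A : Finset (ι → ℤ)) :
    (proj i (compress j A)).card ≤ (proj i A).card := by
  rcases eq_or_ne j i with rfl | h
  · exact Finset.card_le_card (proj_compress_self_subset j A)
  · exact (Finset.card_le_card (proj_compress_subset_compress_proj h A)).trans
      (card_compress_le _ _)

lemma nonneg_of_mem_compress (hA : ∀ x ∈ A, ∀ l, 0 ≤ x l) (hx : x ∈ compress i A) (l : ι) :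
    0 ≤ x l := by
  rcases mem_compress.1 hx with ⟨hxA, -⟩ | ⟨w, hw, rfl⟩
  · exact hA x hxA l
  · rcases eq_or_ne l i with rfl | hl
    · simp
    · simpa [update_of_ne hl] using hA w (bottomLayer_subset i A hw) l

lemma exists_mem_of_mem_compress (hx : x ∈ compress i A) :
    ∃ y ∈ A, (∀ j, j ≠ i → y j = x j) ∧ (0 < x i → y i < x i) := by
  rcases mem_compress.1 hx with ⟨hxA, hxB⟩ | ⟨w, hw, rfl⟩
  · obtain ⟨y, hy, hyx, hlt⟩ := exists_lt_of_not_mem_bottomLayer hxA hxB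
    exact ⟨y, hy, hyx, fun _ => hlt⟩
  · exact ⟨w, bottomLayer_subset i A hw, fun j hj => (update_of_ne hj _ _).symm, by simp⟩

lemma mem_of_mem_compress_of_pos (hx : x ∈ compress i A) (hpos : 0 < x i) : x ∈ A := by
  rcases mem_compress.1 hx with ⟨hxA, -⟩ | ⟨w, -, rfl⟩
  · exact hxA
  · simp at hpos

lemma update_mem_compress_self (hx : x ∈ compress i A) : update x i 0 ∈ compress i A := by
  rcases mem_compress.1 hx with ⟨hxA, -⟩ | ⟨w, hw, rfl⟩
  · exact update_mem_compress hxA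
  · rw [update_idem]
    exact mem_compress.2 (Or.inr ⟨w, hw, rfl⟩)

lemma update_mem_compress_of_ne (hij : i ≠ j) (hA : ∀ x ∈ A, update x i 0 ∈ A)
    (hx : x ∈ compress j A) : update x i 0 ∈ compress j A := by
  rcases mem_compress.1 hx with ⟨hxA, hxB⟩ | ⟨w, hw, rfl⟩
  · refine mem_compress.2 (Or.inl ⟨hA x hxA, fun hB => ?_⟩)
    obtain ⟨y, hy, hyx, hlt⟩ := exists_lt_of_not_mem_bottomLayer hxA hxB
    have hle := (Finset.mem_filter.1 hB).2 (update y i 0) (hA y hy) fun l hl => by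
      rcases eq_or_ne l i with rfl | hli
      · simp
      · simp [update_of_ne hli, hyx l hl]
    simp only [update_of_ne hij.symm] at hle
    exact (not_le.2 hlt) hle
  · rw [update_comm hij.symm]
    exact update_mem_compress (hA w (bottomLayer_subset j A hw))

lemma bottomLayer_eq_filter (hnn : ∀ x ∈ A, ∀ l, 0 ≤ x l) (hA : ∀ x ∈ A, update x i 0 ∈ A) :
    bottomLayer i A = A.filter fun x => x i = 0 := by
  ext x
  simp only [bottomLayer, Finset.mem_filter, and_congr_right_iff]
  intro hx
  constructor
  · intro hmin
    have hle := hmin _ (hA x hx) fun l hl => update_of_ne hl 0 x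
    rw [update_self] at hle
    exact hle.antisymm (hnn x hx i)
  · intro hx0 y hy _
    exact hx0 ▸ hnn y hy i

lemma compress_eq_self (hnn : ∀ x ∈ A, ∀ l, 0 ≤ x l) (hA : ∀ x ∈ A, update x i 0 ∈ A) :
    compress i A = A := by
  have hid : Set.EqOn (fun x : ι → ℤ => update x i 0) id ↑(A.filter fun x => x i = 0) := by
    intro x hx
    simp [(Finset.mem_filter.1 hx).2]
  rw [compress, bottomLayer_eq_filter hnn hA, Finset.image_congr hid, Finset.image_id]
  exact Finset.sdiff_union_of_subset (Finset.filter_subset _ _)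

end Compress

section Iterate

variable {n : ℕ} {A : Finset (Fin n → ℤ)}

lemma compressUpTo_induction (A : Finset (Fin n → ℤ)) {P : ℕ → Finset (Fin n → ℤ) → Prop}
    (zero : P 0 A) (succ : ∀ k (hk : k < n) B, P k B → P (k + 1) (compress ⟨k, hk⟩ B)) :
    ∀ k ≤ n, P k (compressUpTo A k) := by
  intro k
  induction k with
  | zero => exact fun _ => zero
  | succ k ih =>
    intro hk
    rw [compressUpTo, dif_pos (show k < n from hk)]
    exact succ k hk _ (ih (Nat.le_of_succ_le hk))

lemma nonneg_of_mem_compressUpTo (hpos : ∀ x ∈ A, ∀ l, 0 ≤ x l) :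
    ∀ x ∈ compressUpTo A n, ∀ l, 0 ≤ x l :=
  compressUpTo_induction A (P := fun _ B => ∀ x ∈ B, ∀ l, 0 ≤ x l) hpos
    (fun _ _ _ hB _ hx => nonneg_of_mem_compress hB hx) n le_rfl

lemma card_proj_compressUpTo_le (i : Fin n) : (proj i (compressUpTo A n)).card ≤ (proj i A).card :=
  compressUpTo_induction A (P := fun _ B => (proj i B).card ≤ (proj i A).card) le_rfl
    (fun _ _ _ hB => (card_proj_compress_le _ _ _).trans hB) n le_rfl

lemma mem_of_mem_compressUpTo_of_pos {x : Fin n → ℤ} (hx : x ∈ compressUpTo A n)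
    (hpos : ∀ l, 0 < x l) : x ∈ A :=
  compressUpTo_induction A (P := fun _ B => ∀ x ∈ B, (∀ l, 0 < x l) → x ∈ A)
    (fun _ hx _ => hx)
    (fun _ _ _ hB x hx hpos => hB x (mem_of_mem_compress_of_pos hx (hpos _)) hpos)
    n le_rfl x hx hpos

lemma update_mem_compressUpTo (j : Fin n) {x : Fin n → ℤ} (hx : x ∈ compressUpTo A n) :
    update x j 0 ∈ compressUpTo A n := by
  refine compressUpTo_induction A
    (P := fun k B => ∀ j : Fin n, j.1 < k → ∀ x ∈ B, update x j 0 ∈ B)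
    (fun _ hj => absurd hj (Nat.not_lt_zero _)) (fun k hk B hB j hj => ?_) n le_rfl j j.2 x hx
  rcases eq_or_ne j ⟨k, hk⟩ with rfl | hne
  · exact fun _ => update_mem_compress_self
  · have hjk : j.1 < k := by
      rcases Nat.lt_succ_iff_lt_or_eq.1 hj with h | h
      · exact h
      · exact absurd (Fin.ext h) hne
    exact fun _ => update_mem_compress_of_ne hne (hB j hjk)

lemma exists_mem_lowered_of_mem_compressUpTo {k : ℕ} (hk : k ≤ n) :
    ∀ x ∈ compressUpTo A k, ∃ y ∈ A,
      (∀ j : Fin n, j.1 < k → 0 < x j → y j < x j) ∧ ∀ j : Fin n, k ≤ j.1 → y j ≤ x j := by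
  refine compressUpTo_induction A
    (P := fun k B => ∀ x ∈ B, ∃ y ∈ A,
      (∀ j : Fin n, j.1 < k → 0 < x j → y j < x j) ∧ ∀ j : Fin n, k ≤ j.1 → y j ≤ x j)
    (fun x hx => ⟨x, hx, fun _ hj => absurd hj (Nat.not_lt_zero _), fun _ _ => le_rfl⟩)
    (fun k hk B hB x hx => ?_) k hk
  obtain ⟨z, hz, hzx, hzlt⟩ := exists_mem_of_mem_compress hx
  obtain ⟨y, hy, hlt, hle⟩ := hB z hz
  refine ⟨y, hy, fun j hj hxj => ?_, fun j hj => ?_⟩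
  · rcases Nat.lt_succ_iff_lt_or_eq.1 hj with h | h
    · have hne : j ≠ ⟨k, hk⟩ := Fin.ne_of_val_ne h.ne
      rw [← hzx j hne] at hxj ⊢
      exact hlt j h hxj
    · obtain rfl : j = ⟨k, hk⟩ := Fin.ext h
      exact (hle _ le_rfl).trans_lt (hzlt hxj)
  · have hne : j ≠ ⟨k, hk⟩ := Fin.ne_of_val_ne (by simp; omega)
    rw [← hzx j hne]
    exact hle j (Nat.le_of_succ_le hj)

lemma exists_eq_zero_of_mem_compressUpTo (hpos : ∀ x ∈ A, ∀ l, 0 ≤ x l)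
    (hA : IsWeakAntichain A) {x : Fin n → ℤ} (hx : x ∈ compressUpTo A n) : ∃ i, x i = 0 := by
  by_contra! hne
  have hxpos : ∀ l, 0 < x l :=
    fun l => (nonneg_of_mem_compressUpTo hpos x hx l).lt_of_ne (hne l).symm
  obtain ⟨y, hy, hlt, -⟩ := exists_mem_lowered_of_mem_compressUpTo le_rfl x hx
  exact hA y hy x (mem_of_mem_compressUpTo_of_pos hx hxpos) fun j => hlt j j.2 (hxpos j)

end Iterate

section Layers

variable {n : ℕ} {S : Finset (Fin n → ℤ)}

lemma layersRest_eq_filter (hnn : ∀ x ∈ S, ∀ l, 0 ≤ x l)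
    (hS : ∀ i : Fin n, ∀ x ∈ S, update x i 0 ∈ S) :
    ∀ k ≤ n, layersRest S k = S.filter fun x => ∀ l : Fin n, l.1 < k → x l ≠ 0 := by
  intro k
  induction k with
  | zero => simp [layersRest]
  | succ k ih =>
    intro hk
    have hR (x : Fin n → ℤ) (hx : x ∈ S.filter fun x => ∀ l : Fin n, l.1 < k → x l ≠ 0) :=
      update_mem_filter (i := ⟨k, hk⟩) (hS _) (fun x hx l hl => by
        rw [update_of_ne (Fin.ne_of_val_ne hl.ne)]
        exact hx l hl) hx
    rw [layersRest, dif_pos (show k < n from hk), ih (Nat.le_of_succ_le hk),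
      bottomLayer_eq_filter (fun x hx => hnn x (Finset.mem_of_mem_filter x hx)) hR,
      ← Finset.filter_not, Finset.filter_filter]
    refine Finset.filter_congr fun x _ => ⟨fun ⟨h, hk0⟩ l hl => ?_, fun h => ⟨?_, ?_⟩⟩
    · rcases Nat.lt_succ_iff_lt_or_eq.1 hl with hl | hl
      · exact h l hl
      · exact (Fin.ext hl : l = ⟨k, hk⟩) ▸ hk0
    · exact fun l hl => h l (Nat.lt_succ_of_lt hl)
    · exact h ⟨k, hk⟩ (Nat.lt_succ_self k)

lemma layer_eq_filter (hnn : ∀ x ∈ S, ∀ l, 0 ≤ x l)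
    (hS : ∀ i : Fin n, ∀ x ∈ S, update x i 0 ∈ S) (k : Fin n) :
    layer S k = S.filter fun x => x k = 0 ∧ ∀ l : Fin n, l < k → x l ≠ 0 := by
  have hR (x : Fin n → ℤ) (hx : x ∈ S.filter fun x => ∀ l : Fin n, l < k → x l ≠ 0) :=
    update_mem_filter (hS k) (fun x hx l hl => by
      rw [update_of_ne hl.ne]
      exact hx l hl) hx
  have hrest : layersRest S k = S.filter fun x => ∀ l : Fin n, l < k → x l ≠ 0 := by
    simp only [layersRest_eq_filter hnn hS k k.2.le, Fin.lt_def]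
  rw [layer, hrest, bottomLayer_eq_filter (fun x hx => hnn x (Finset.mem_of_mem_filter x hx)) hR,
    Finset.filter_filter]
  exact Finset.filter_congr fun _ _ => and_comm

lemma eq_biUnion_layer (hnn : ∀ x ∈ S, ∀ l, 0 ≤ x l)
    (hS : ∀ i : Fin n, ∀ x ∈ S, update x i 0 ∈ S) (hzero : ∀ x ∈ S, ∃ i, x i = 0) :
    S = Finset.univ.biUnion (layer S) := by
  ext x
  simp only [Finset.mem_biUnion, Finset.mem_univ, true_and, layer_eq_filter hnn hS,
    Finset.mem_filter]
  refine ⟨fun hx => ?_, fun ⟨_, hx, _⟩ => hx⟩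
  obtain ⟨i, hi⟩ := hzero x hx
  obtain ⟨k, hk, hkmin⟩ := (Finset.univ.filter fun l => x l = 0).exists_min_image id
    ⟨i, Finset.mem_filter.2 ⟨Finset.mem_univ i, hi⟩⟩
  refine ⟨k, hx, (Finset.mem_filter.1 hk).2, fun l hl hl0 => ?_⟩
  exact hl.not_ge (hkmin l (Finset.mem_filter.2 ⟨Finset.mem_univ l, hl0⟩))

end Layers

/-- If `A ⊆ ℤ_{≥0}^n` is a finite weak antichain, then
`A' = C_n(C_{n-1}(⋯(C_1(A))⋯))` satisfies: (i) `|π_i(A')| ≤ |π_i(A)|` for each `i`;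
(ii) `A'` is `k`-compressed for all `k`; (iii) `A'` is layer-decomposable;
(iv) `A'_k = {x ∈ A' : x_k = 0 but x_l ≠ 0 for l < k}` for all `k`; (v) `A' ⊆ X_n`. -/
theorem compressUpTo_properties (n : ℕ) (A : Finset (Fin n → ℤ))
    (hpos : ∀ x ∈ A, ∀ i, 0 ≤ x i) (hA : IsWeakAntichain A) :
    (∀ i : Fin n, (proj i (compressUpTo A n)).card ≤ (proj i A).card) ∧
    (∀ k : Fin n, compress k (compressUpTo A n) = compressUpTo A n) ∧
    (compressUpTo A n = Finset.univ.biUnion (layer (compressUpTo A n))) ∧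
    (∀ k : Fin n, layer (compressUpTo A n) k =
      (compressUpTo A n).filter fun x => x k = 0 ∧ ∀ l : Fin n, l < k → x l ≠ 0) ∧
    (∀ x ∈ compressUpTo A n, ∃ i, x i = 0) := by
  have hnn := nonneg_of_mem_compressUpTo hpos
  have hclosed : ∀ i : Fin n, ∀ x ∈ compressUpTo A n, update x i 0 ∈ compressUpTo A n :=
    fun i _ => update_mem_compressUpTo i
  have hzero : ∀ x ∈ compressUpTo A n, ∃ i, x i = 0 :=
    fun _ => exists_eq_zero_of_mem_compressUpTo hpos hA
  exact ⟨card_proj_compressUpTo_le, fun k => compress_eq_self hnn (hclosed k),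
    eq_biUnion_layer hnn hclosed hzero, layer_eq_filter hnn hclosed, hzero⟩

end ProjWA
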